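/- arXiv:2301.09803 — 3 statements merged into one kernel-verified Lean document; each statement's English description precedes it below -/
import Mathlib

section
/- Let S be a closed, convex and bounded subset of ℝⁿ and g : ℝⁿ → ℝ a convex function. Then there exist ℓ ≥ 0, λ₀ ∈ (0,1) and a constant C > 0 such that for all λ ∈ (0, λ₀): (i) the Moreau envelope M_λg is ℓ-Lipschitz on S, and (ii) sup_{x ∈ S} |M_λg(x) − g(x)| ≤ ℓ·√λ·C. (Uniform approximation on bounded sets, Proposition 2.2.) -/
open Filter Topology

/-- The Moreau envelope of `g : H → ℝ` with parameter `lam`. -/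
noncomputable def moreauEnv {H : Type*} [NormedAddCommGroup H] [InnerProductSpace ℝ H]
    (g : H → ℝ) (lam : ℝ) (x : H) : ℝ :=
  ⨅ z : H, (g z + ‖x - z‖ ^ 2 / (2 * lam))

/-!
On a bounded set `S`, the convex function `g` is `L`-Lipschitz on the closed 1-neighbourhood
of `S`, and convexity turns this into the global minorant `g x - L‖z - x‖ ≤ g z` for `x ∈ S`.
Minimizing `g x - L t + t² / (2λ)` over `t ≥ 0` gives `g x - λL²/2 ≤ M_λ g x ≤ g x`.
When `2λL ≤ 1`, points `z` with `‖y - z‖ > 1` never beat `z = y` in the infimum defining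
`M_λ g y`, and for the others, translating `z` by `x - y` shows `M_λ g x ≤ M_λ g y + L‖x - y‖`.
-/

open Metric Set
open scoped NNReal

section Convex

variable {E : Type*} [NormedAddCommGroup E] [NormedSpace ℝ E] {g : E → ℝ} {L : ℝ≥0}

lemma ConvexOn.sub_mul_norm_le_of_lipschitzOnWith_ball (hg : ConvexOn ℝ univ g) {x : E}
    {r : ℝ} (hr : 0 < r) (hL : LipschitzOnWith L g (ball x r)) (z : E) :
    g x - L * ‖z - x‖ ≤ g z := by
  set d := ‖z - x‖
  have hd : 0 ≤ d := norm_nonneg _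
  -- the slope of `g` from `x` to `z` dominates its slope to the point `w` of `[x, z]` with
  -- `‖w - x‖ = t * d < r`, where the Lipschitz bound applies
  set t := r / (r + d)
  have ht0 : 0 < t := by positivity
  have ht1 : t ≤ 1 := div_le_one_of_le₀ (by linarith) (by positivity)
  have hwx : dist ((1 - t) • x + t • z) x = t * d := by
    rw [dist_eq_norm, show (1 - t) • x + t • z - x = t • (z - x) by module, norm_smul,
      Real.norm_of_nonneg ht0.le]
  have hw : (1 - t) • x + t • z ∈ ball x r := by
    rw [mem_ball, hwx, div_mul_eq_mul_div, div_lt_iff₀ (by positivity)]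
    nlinarith
  have hconv : g ((1 - t) • x + t • z) ≤ (1 - t) * g x + t * g z := by
    simpa using hg.2 (mem_univ x) (mem_univ z) (by linarith) ht0.le (by ring)
  have hlip : g x ≤ g ((1 - t) • x + t • z) + L * (t * d) := by
    have := hL.le_add_mul (mem_ball_self hr) hw
    rwa [dist_comm, hwx] at this
  have : t * (g x - L * d) ≤ t * g z := by linarith
  exact le_of_mul_le_mul_left this ht0

lemma ConvexOn.sub_mul_norm_le_of_lipschitzOnWith_cthickening (hg : ConvexOn ℝ univ g)
    {S : Set E} {δ : ℝ} (hδ : 0 < δ) (hL : LipschitzOnWith L g (cthickening δ S)) {x : E}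
    (hx : x ∈ S) (z : E) : g x - L * ‖z - x‖ ≤ g z :=
  hg.sub_mul_norm_le_of_lipschitzOnWith_ball hδ
    (hL.mono ((ball_subset_thickening hx δ).trans (thickening_subset_cthickening δ S))) z

end Convex

lemma sub_le_add_sq_div_of_minorant {E : Type*} [SeminormedAddCommGroup E] {g : E → ℝ}
    {lam L : ℝ} (hlam : 0 < lam) {x : E} (hx : ∀ z, g x - L * ‖z - x‖ ≤ g z) (z : E) :
    g x - lam * L ^ 2 / 2 ≤ g z + ‖x - z‖ ^ 2 / (2 * lam) := by
  have hamgm : L * ‖x - z‖ - lam * L ^ 2 / 2 ≤ ‖x - z‖ ^ 2 / (2 * lam) := by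
    rw [le_div_iff₀ (by positivity)]
    nlinarith [sq_nonneg (‖x - z‖ - lam * L)]
  have := hx z
  rw [norm_sub_rev] at this
  linarith

section MoreauEnvelope

variable {H : Type*} [NormedAddCommGroup H] [InnerProductSpace ℝ H] {g : H → ℝ} {lam : ℝ}

lemma moreauEnv_le_of_minorant {L : ℝ} (hlam : 0 < lam) {x : H}
    (hx : ∀ z, g x - L * ‖z - x‖ ≤ g z) (z : H) :
    moreauEnv g lam x ≤ g z + ‖x - z‖ ^ 2 / (2 * lam) :=
  ciInf_le ⟨_, forall_mem_range.2 (sub_le_add_sq_div_of_minorant hlam hx)⟩ z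

lemma moreauEnv_le_self_of_minorant {L : ℝ} (hlam : 0 < lam) {x : H}
    (hx : ∀ z, g x - L * ‖z - x‖ ≤ g z) : moreauEnv g lam x ≤ g x := by
  simpa using moreauEnv_le_of_minorant hlam hx x

lemma abs_moreauEnv_sub_le_of_minorant {L : ℝ} (hlam : 0 < lam) {x : H}
    (hx : ∀ z, g x - L * ‖z - x‖ ≤ g z) :
    |moreauEnv g lam x - g x| ≤ lam * L ^ 2 / 2 := by
  have hlow : g x - lam * L ^ 2 / 2 ≤ moreauEnv g lam x :=
    le_ciInf (sub_le_add_sq_div_of_minorant hlam hx)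
  have hup := moreauEnv_le_self_of_minorant hlam hx
  have : 0 ≤ lam * L ^ 2 / 2 := by positivity
  exact abs_le.2 ⟨by linarith, by linarith⟩

variable {S : Set H} {L : ℝ≥0}

lemma moreauEnv_le_add_mul_dist (hg : ConvexOn ℝ univ g)
    (hL : LipschitzOnWith L g (cthickening 1 S)) (hlam : 0 < lam) (hlamL : 2 * lam * L ≤ 1)
    {x y : H} (hx : x ∈ S) (hy : y ∈ S) :
    moreauEnv g lam x ≤ moreauEnv g lam y + L * dist x y := by
  have hmin {x} (hx : x ∈ S) := hg.sub_mul_norm_le_of_lipschitzOnWith_cthickening one_pos hL hx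
  rw [← sub_le_iff_le_add]
  refine le_ciInf fun z => ?_
  rcases le_or_gt ‖y - z‖ 1 with hz | hz
  · have hz' : z ∈ cthickening 1 S :=
      mem_cthickening_of_dist_le z y 1 S hy (by rwa [dist_comm, dist_eq_norm])
    have hzx : z + (x - y) ∈ cthickening 1 S :=
      mem_cthickening_of_dist_le _ x 1 S hx
        (by rwa [dist_eq_norm, show z + (x - y) - x = -(y - z) by abel, norm_neg])
    have h1 := moreauEnv_le_of_minorant hlam (hmin hx) (z + (x - y))
    rw [show x - (z + (x - y)) = y - z by abel] at h1
    have h2 : g (z + (x - y)) ≤ g z + L * dist x y := by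
      simpa [dist_eq_norm] using hL.le_add_mul hzx hz'
    linarith
  · -- `‖y - z‖ > 1 ≥ 2λL`, so the quadratic penalty outweighs the linear gain `L‖y - z‖`
    have h1 := hmin hy z
    have h2 : L * ‖z - y‖ ≤ ‖y - z‖ ^ 2 / (2 * lam) := by
      rw [norm_sub_rev, le_div_iff₀ (by positivity)]
      nlinarith
    have h3 := moreauEnv_le_self_of_minorant hlam (hmin hx)
    have h4 := hL.le_add_mul (self_subset_cthickening S hx) (self_subset_cthickening S hy)
    linarith

lemma lipschitzOnWith_moreauEnv (hg : ConvexOn ℝ univ g)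
    (hL : LipschitzOnWith L g (cthickening 1 S)) (hlam : 0 < lam) (hlamL : 2 * lam * L ≤ 1) :
    LipschitzOnWith L (moreauEnv g lam) S :=
  LipschitzOnWith.of_le_add_mul L fun _ hx _ hy => moreauEnv_le_add_mul_dist hg hL hlam hlamL hx hy

end MoreauEnvelope

lemma mul_sq_div_two_le_mul_sqrt_mul {L lam : ℝ} (hL : 0 ≤ L) (hlam : 0 ≤ lam)
    (hlam1 : lam ≤ 1) :
    lam * L ^ 2 / 2 ≤ L * √lam * ((L + 1) / 2) := by
  have hs1 : √lam ≤ 1 := Real.sqrt_le_one.mpr hlam1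
  calc lam * L ^ 2 / 2 = L * √lam * (√lam * L / 2) := by
        linear_combination (-(L ^ 2 / 2)) * Real.mul_self_sqrt hlam
    _ ≤ L * √lam * ((L + 1) / 2) := by gcongr; nlinarith

theorem stmt1_general {n : ℕ} (S : Set (EuclideanSpace ℝ (Fin n)))
    (hSbd : Bornology.IsBounded S)
    (g : EuclideanSpace ℝ (Fin n) → ℝ) (hg : ConvexOn ℝ Set.univ g) :
    ∃ ℓ : ℝ, 0 ≤ ℓ ∧ ∃ lam₀ ∈ Set.Ioo (0 : ℝ) 1, ∃ C > (0 : ℝ),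
      ∀ lam ∈ Set.Ioo (0 : ℝ) lam₀,
        (∀ x ∈ S, ∀ y ∈ S, |moreauEnv g lam x - moreauEnv g lam y| ≤ ℓ * ‖x - y‖) ∧
        (∀ x ∈ S, |moreauEnv g lam x - g x| ≤ ℓ * Real.sqrt lam * C) := by
  obtain ⟨L, hL⟩ : ∃ L, LipschitzOnWith L g (cthickening 1 S) :=
    hg.locallyLipschitz.locallyLipschitzOn.exists_lipschitzOnWith_of_compact
      (isCompact_of_isClosed_isBounded isClosed_cthickening hSbd.cthickening)
  have hL0 : (0 : ℝ) ≤ L := L.coe_nonneg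
  refine ⟨L, hL0, 1 / (2 * L + 2), ⟨by positivity, by rw [div_lt_one (by positivity)]; linarith⟩,
    (L + 1) / 2, by positivity, ?_⟩
  rintro lam ⟨hlam, hlam₀⟩
  rw [lt_div_iff₀ (by positivity)] at hlam₀
  have hlamL : 2 * lam * L ≤ 1 := by nlinarith
  refine ⟨fun x hx y hy => ?_, fun x hx => ?_⟩
  · simpa [dist_eq_norm] using (lipschitzOnWith_moreauEnv hg hL hlam hlamL).dist_le_mul x hx y hy
  · calc |moreauEnv g lam x - g x| ≤ lam * L ^ 2 / 2 :=
          abs_moreauEnv_sub_le_of_minorant hlam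
            (hg.sub_mul_norm_le_of_lipschitzOnWith_cthickening one_pos hL hx)
      _ ≤ L * √lam * ((L + 1) / 2) := mul_sq_div_two_le_mul_sqrt_mul hL0 hlam.le (by nlinarith)

/-- Uniform approximation of a convex function by its Moreau envelope on bounded sets
(Proposition 2.2): for `S ⊆ ℝⁿ` closed, convex and bounded and `g : ℝⁿ → ℝ` convex,
there are `ℓ ≥ 0`, `λ₀ ∈ (0,1)` and `C > 0` such that for all `λ ∈ (0, λ₀)` the Moreau
envelope `M_λ g` is `ℓ`-Lipschitz on `S` and `sup_{x ∈ S} |M_λ g x − g x| ≤ ℓ √λ C`. -/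
theorem stmt1 {n : ℕ} (S : Set (EuclideanSpace ℝ (Fin n)))
    (hScl : IsClosed S) (hSconv : Convex ℝ S) (hSbd : Bornology.IsBounded S)
    (g : EuclideanSpace ℝ (Fin n) → ℝ) (hg : ConvexOn ℝ Set.univ g) :
    ∃ ℓ : ℝ, 0 ≤ ℓ ∧ ∃ lam₀ ∈ Set.Ioo (0 : ℝ) 1, ∃ C > (0 : ℝ),
      ∀ lam ∈ Set.Ioo (0 : ℝ) lam₀,
        (∀ x ∈ S, ∀ y ∈ S, |moreauEnv g lam x - moreauEnv g lam y| ≤ ℓ * ‖x - y‖) ∧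
        (∀ x ∈ S, |moreauEnv g lam x - g x| ≤ ℓ * Real.sqrt lam * C) :=
  stmt1_general S hSbd g hg
end

section
/- Let H be a separable real Hilbert space, Y a real Banach space, K ⊆ Y a nonempty closed convex cone, and C ⊆ Y* a nonempty convex weak*-compact set whose generated cone has weak*-closure equal to the positive dual cone K⁺ = {v* ∈ Y* : v*(v) ≥ 0 for all v ∈ K}. Let Φ : H × ℝ^m → Y be a function, h : H → ℝ any function, and define S(x,z) := sup_{v* ∈ C} ( v*(Φ(x,z)) + h(x) ). Then for every (x,z) ∈ H × ℝ^m, Φ(x,z) ∈ −K if and only if S(x,z) ≤ h(x). Consequently, for any probability space (Ω,𝓕,ℙ) and any random vector ξ : Ω → ℝ^m, the sets {ω : Φ(x,ξ(ω)) ∈ −K} and {ω : S(x,ξ(ω)) ≤ h(x)} coincide, so ℙ(Φ(x,ξ) ∈ −K) = ℙ(S(x,ξ) ≤ h(x)) for all x ∈ H. (Proposition 2.3.) -/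
open Filter Topology MeasureTheory

theorem aux_mem_neg_iff {Y : Type*} [NormedAddCommGroup Y] [NormedSpace ℝ Y]
    (K : Set Y) (hKne : K.Nonempty) (hKcl : IsClosed K) (hKconv : Convex ℝ K)
    (hKcone : ∀ c : ℝ, 0 ≤ c → ∀ y ∈ K, c • y ∈ K)
    (C : Set (WeakDual ℝ Y))
    (hCgen : closure {w : WeakDual ℝ Y | ∃ c : ℝ, 0 ≤ c ∧ ∃ v ∈ C, w = c • v}
      = {w : WeakDual ℝ Y | ∀ y ∈ K, 0 ≤ w y})
    (u : Y) : u ∈ -K ↔ ∀ v ∈ C, (v : WeakDual ℝ Y) u ≤ 0 := by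
  have hCsub : ∀ v ∈ C, ∀ y ∈ K, 0 ≤ (v : WeakDual ℝ Y) y := by
    intro v hv
    have : v ∈ closure {w : WeakDual ℝ Y | ∃ c : ℝ, 0 ≤ c ∧ ∃ v ∈ C, w = c • v} :=
      subset_closure ⟨1, zero_le_one, v, hv, (one_smul ℝ v).symm⟩
    rw [hCgen] at this
    exact this
  constructor
  · intro hu v hv
    have hnu : -u ∈ K := Set.mem_neg.mp hu
    have := hCsub v hv (-u) hnu
    have : (v : WeakDual ℝ Y) (-u) = -(v u) := map_neg _ _
    linarith [hCsub v hv (-u) hnu, this ▸ hCsub v hv (-u) hnu]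
  · intro hv
    -- all elements of K⁺ are ≤ 0 at u
    have hK' : ∀ w : WeakDual ℝ Y, (∀ y ∈ K, 0 ≤ w y) → w u ≤ 0 := by
      intro w hw
      have hwmem : w ∈ closure {w : WeakDual ℝ Y | ∃ c : ℝ, 0 ≤ c ∧ ∃ v ∈ C, w = c • v} := by
        rw [hCgen]; exact hw
      have hclosed : IsClosed {w : WeakDual ℝ Y | w u ≤ 0} :=
        isClosed_le (WeakDual.eval_continuous u) continuous_const
      have hsub : {w : WeakDual ℝ Y | ∃ c : ℝ, 0 ≤ c ∧ ∃ v ∈ C, w = c • v}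
          ⊆ {w : WeakDual ℝ Y | w u ≤ 0} := by
        rintro _ ⟨c, hc, v, hvC, rfl⟩
        have : (c • v) u = c * v u := rfl
        rw [Set.mem_setOf_eq, this]
        exact mul_nonpos_of_nonneg_of_nonpos hc (hv v hvC)
      exact (hclosed.closure_subset_iff.mpr hsub) hwmem
    -- separation: suppose -u ∉ K
    by_contra hu
    have hnu : -u ∉ K := fun hmem => hu (Set.mem_neg.mpr hmem)
    obtain ⟨f, s, hfK, hfu⟩ := geometric_hahn_banach_closed_point hKconv hKcl hnu
    obtain ⟨y0, hy0⟩ := hKne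
    have h0K : (0 : Y) ∈ K := by
      have := hKcone 0 le_rfl y0 hy0
      simpa using this
    have hs : (0 : ℝ) < s := by simpa using hfK 0 h0K
    have hfle : ∀ y ∈ K, f y ≤ 0 := by
      intro y hy
      by_contra hpos
      push_neg at hpos
      have hc : (0 : ℝ) ≤ (s + 1) / f y := div_nonneg (by linarith) hpos.le
      have := hfK _ (hKcone _ hc y hy)
      rw [f.map_smul, smul_eq_mul, div_mul_cancel₀ _ (ne_of_gt hpos)] at this
      linarith
    have hw : ∀ y ∈ K, 0 ≤ (show WeakDual ℝ Y from -f) y := by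
      intro y hy
      have : (show WeakDual ℝ Y from -f) y = -(f y) := rfl
      rw [this]
      linarith [hfle y hy]
    have := hK' _ hw
    have hval : (show WeakDual ℝ Y from -f) u = -(f u) := rfl
    rw [hval] at this
    have : f (-u) = -(f u) := map_neg _ _
    linarith [hfu, this ▸ hfu]

/-- Proposition 2.3: scalarized representation of the conic constraint and of its
probability function.  `C` is a nonempty convex weak*-compact subset of `Y*` whose
generated cone has weak*-closure equal to the positive dual cone of the nonempty
closed convex cone `K`.  With `S x z = sup_{v* ∈ C} ( v*(Φ(x,z)) + h(x) )`, we have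
`Φ(x,z) ∈ −K ↔ S(x,z) ≤ h(x)`, and consequently, for any random vector `ξ`, the sets
`{ω | Φ(x,ξ(ω)) ∈ −K}` and `{ω | S(x,ξ(ω)) ≤ h(x)}` coincide and have the same
probability. -/
theorem stmt2 {H Y : Type*} [NormedAddCommGroup H] [InnerProductSpace ℝ H] [CompleteSpace H]
    [SecondCountableTopology H]
    [NormedAddCommGroup Y] [NormedSpace ℝ Y] [CompleteSpace Y] {m : ℕ}
    (K : Set Y) (hKne : K.Nonempty) (hKcl : IsClosed K) (hKconv : Convex ℝ K)
    (hKcone : ∀ c : ℝ, 0 ≤ c → ∀ y ∈ K, c • y ∈ K)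
    (C : Set (WeakDual ℝ Y)) (hCne : C.Nonempty) (hCconv : Convex ℝ C) (hCcpt : IsCompact C)
    (hCgen : closure {w : WeakDual ℝ Y | ∃ c : ℝ, 0 ≤ c ∧ ∃ v ∈ C, w = c • v}
      = {w : WeakDual ℝ Y | ∀ y ∈ K, 0 ≤ w y})
    (Φ : H → EuclideanSpace ℝ (Fin m) → Y) (h : H → ℝ)
    (S : H → EuclideanSpace ℝ (Fin m) → ℝ)
    (hS : ∀ x z, S x z = ⨆ v : C, ((v : WeakDual ℝ Y) (Φ x z) + h x))
    {Ω : Type*} [MeasurableSpace Ω] (P : Measure Ω) [IsProbabilityMeasure P]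
    (ξ : Ω → EuclideanSpace ℝ (Fin m)) :
    (∀ (x : H) (z : EuclideanSpace ℝ (Fin m)), Φ x z ∈ -K ↔ S x z ≤ h x) ∧
    (∀ x : H, {ω | Φ x (ξ ω) ∈ -K} = {ω | S x (ξ ω) ≤ h x} ∧
      P {ω | Φ x (ξ ω) ∈ -K} = P {ω | S x (ξ ω) ≤ h x}) := by
  have key : ∀ (x : H) (z : EuclideanSpace ℝ (Fin m)), Φ x z ∈ -K ↔ S x z ≤ h x := by
    intro x z
    rw [hS x z, aux_mem_neg_iff K hKne hKcl hKconv hKcone C hCgen (Φ x z)]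
    haveI : Nonempty C := hCne.to_subtype
    have hbdd : BddAbove (Set.range fun v : C => (v : WeakDual ℝ Y) (Φ x z) + h x) := by
      have hcont : Continuous fun w : WeakDual ℝ Y => w (Φ x z) + h x :=
        (WeakDual.eval_continuous (Φ x z)).add continuous_const
      have himg : IsCompact ((fun w : WeakDual ℝ Y => w (Φ x z) + h x) '' C) :=
        hCcpt.image hcont
      have : (fun w : WeakDual ℝ Y => w (Φ x z) + h x) '' C
          = Set.range fun v : C => (v : WeakDual ℝ Y) (Φ x z) + h x := Set.image_eq_range _ _
      rw [← this]
      exact himg.bddAbove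
    constructor
    · intro hle
      apply ciSup_le
      rintro ⟨v, hv⟩
      have := hle v hv
      simp only []
      linarith
    · intro hle v hv
      have := le_ciSup hbdd ⟨v, hv⟩
      simp only [] at this
      linarith [le_trans this hle]
  refine ⟨key, fun x => ?_⟩
  have hset : {ω | Φ x (ξ ω) ∈ -K} = {ω | S x (ξ ω) ≤ h x} := by
    ext ω; exact key x (ξ ω)
  exact ⟨hset, by rw [hset]⟩
end

section
/- Let H = ℝⁿ, let S : ℝⁿ × ℝ^m → ℝ be convex and continuous, let h : ℝⁿ → ℝ be convex and continuously differentiable, and fix λ > 0. Let x̄ ∈ ℝⁿ satisfy S(x̄, 0) < h(x̄). Then there exist constants C_λ > 0 and ε > 0 such that for every x ∈ B_ε(x̄) and every z ∈ ℝ^m, if p ∈ ℝⁿ × ℝ^m is the (unique) minimizer of u ↦ S(u) + ‖(x,z) − u‖²/(2λ), then (1/λ)·‖(x,z) − p‖ + ‖∇h(x)‖ ≤ C_λ·(‖z‖ + 1). In particular the gradient of the Moreau envelope M_λS satisfies ‖∇_x M_λS(x,z) − ∇h(x)‖ ≤ C_λ·(‖z‖ + 1) for all such (x,z). (Lemma 4.1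 / growth condition for the regularized gradients.) -/
/-!
A convex function on a finite-dimensional space is locally Lipschitz, and convexity along rays
turns this into a global minorant `S u ≥ S w₀ - b ‖u - w₀‖` at `w₀ = (x̄, 0)`. Comparing the
proximal objective at its minimizer `p` with its value at `(x, 0)` then gives
`‖w - p‖² ≤ 2λb ‖w - p‖ + (‖z‖ + λb)² + const` for `w = (x, z)` with `x` near `x̄`, so the
proximal displacement grows at most linearly in `‖z‖`; `∇h` is bounded near `x̄` by continuity.
-/

lemma ConvexOn.exists_sub_mul_norm_le_of_locallyLipschitz {E : Type*} [SeminormedAddCommGroup E]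
    [NormedSpace ℝ E] {f : E → ℝ} (hf : ConvexOn ℝ Set.univ f) (hl : LocallyLipschitz f)
    (w₀ : E) : ∃ b, 0 ≤ b ∧ ∀ u, f w₀ - b * ‖u - w₀‖ ≤ f u := by
  obtain ⟨K, t, ht, hK⟩ := hl w₀
  obtain ⟨δ, hδ, hδt⟩ := Metric.nhds_basis_closedBall.mem_iff.mp ht
  have near : ∀ u, ‖u - w₀‖ ≤ δ → f w₀ - K * ‖u - w₀‖ ≤ f u := fun u hu => by
    have := hK.dist_le_mul u (hδt (mem_closedBall_iff_norm.mpr hu)) w₀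
      (hδt (Metric.mem_closedBall_self hδ.le))
    rw [Real.dist_eq, dist_eq_norm] at this
    linarith [neg_abs_le (f u - f w₀)]
  refine ⟨K, K.2, fun u => ?_⟩
  rcases le_or_gt ‖u - w₀‖ δ with hu | hu
  · exact near u hu
  -- Convexity along the ray from `w₀` through `u` pushes the bound at distance `δ` out to `u`.
  set s := δ / ‖u - w₀‖
  have hs0 : 0 < s := div_pos hδ (hδ.trans hu)
  have hs1 : s ≤ 1 := (div_le_one (hδ.trans hu)).mpr hu.le
  have hst : s * ‖u - w₀‖ = δ := div_mul_cancel₀ _ (hδ.trans hu).ne'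
  have hy : ‖((1 - s) • w₀ + s • u) - w₀‖ = δ := by
    rw [show (1 - s) • w₀ + s • u - w₀ = s • (u - w₀) by module, norm_smul,
      Real.norm_of_nonneg hs0.le, hst]
  have hconv := hf.2 (Set.mem_univ w₀) (Set.mem_univ u) (sub_nonneg.mpr hs1) hs0.le (by ring)
  have hnear := near _ hy.le
  rw [hy] at hnear
  have hscaled : s * (f w₀ - K * ‖u - w₀‖) ≤ s * f u := by
    simp only [smul_eq_mul] at hconv
    nlinarith
  exact le_of_mul_le_mul_left hscaled hs0

lemma le_add_add_sqrt_of_sq_le {t B C D : ℝ} (hB : 0 ≤ B) (hC : 0 ≤ C) (hD : 0 ≤ D)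
    (h : t ^ 2 ≤ B * t + D ^ 2 + C) : t ≤ B + D + √C := by
  by_contra! ht
  have hs := Real.sq_sqrt hC
  have hs0 := Real.sqrt_nonneg C
  nlinarith [mul_le_mul_of_nonneg_left ht.le hD, mul_le_mul_of_nonneg_left ht.le hs0]

lemma norm_sub_le_of_isMinOn_prox {E : Type*} [SeminormedAddCommGroup E] {f : E → ℝ}
    {lam b : ℝ} {w₀ w p : E} (hlam : 0 < lam) (hb : 0 ≤ b)
    (hf : ∀ u, f w₀ - b * ‖u - w₀‖ ≤ f u)
    (hmin : IsMinOn (fun u => f u + ‖w - u‖ ^ 2 / (2 * lam)) Set.univ p) (q : E) :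
    ‖w - p‖ ≤ 3 * lam * b + ‖w - q‖ + √(2 * lam * (f q - f w₀ + b * ‖q - w₀‖)) := by
  have hpq : f p + ‖w - p‖ ^ 2 / (2 * lam) ≤ f q + ‖w - q‖ ^ 2 / (2 * lam) :=
    hmin (Set.mem_univ q)
  have hp : ‖p - w₀‖ ≤ ‖w - p‖ + ‖w - q‖ + ‖q - w₀‖ := by
    have h₁ := norm_sub_le ((q - w₀) + (w - q)) (w - p)
    have h₂ := norm_add_le (q - w₀) (w - q)
    rw [show q - w₀ + (w - q) - (w - p) = p - w₀ by abel] at h₁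
    linarith
  have hK : 0 ≤ f q - f w₀ + b * ‖q - w₀‖ := by linarith [hf q]
  have hquad : ‖w - p‖ ^ 2 ≤ 2 * lam * b * ‖w - p‖ + (‖w - q‖ + lam * b) ^ 2
      + 2 * lam * (f q - f w₀ + b * ‖q - w₀‖) := by
    have hmin' : ‖w - p‖ ^ 2 ≤ ‖w - q‖ ^ 2 + 2 * lam * (f q - f p) := by
      have h2lam : 0 < 2 * lam := by positivity
      have := mul_le_mul_of_nonneg_left hpq h2lam.le
      rw [mul_add, mul_add, mul_div_cancel₀ _ h2lam.ne', mul_div_cancel₀ _ h2lam.ne'] at this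
      linarith
    have hfp := mul_le_mul_of_nonneg_left ((hf p).trans' (by gcongr) :
      f w₀ - b * (‖w - p‖ + ‖w - q‖ + ‖q - w₀‖) ≤ f p) (by positivity : 0 ≤ 2 * lam)
    nlinarith [sq_nonneg (lam * b), mul_nonneg (mul_nonneg hlam.le hb) (norm_nonneg (w - q))]
  have := le_add_add_sqrt_of_sq_le (by positivity) (mul_nonneg (by positivity) hK)
    (by positivity) hquad
  linarith

open WithLp in
lemma isMinOn_prox_toLp {α β : Type*} [SeminormedAddCommGroup α] [SeminormedAddCommGroup β]
    {g : α → β → ℝ} {lam : ℝ} {x : α} {z : β} {p : α × β}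
    (hmin : IsMinOn (fun u : α × β => g u.1 u.2 + (‖x - u.1‖ ^ 2 + ‖z - u.2‖ ^ 2) / (2 * lam))
      Set.univ p) :
    IsMinOn (fun u : WithLp 2 (α × β) => g u.fst u.snd + ‖toLp 2 (x, z) - u‖ ^ 2 / (2 * lam))
      Set.univ (toLp 2 p) := by
  intro u _
  simpa [prod_norm_sq_eq_of_L2] using hmin (Set.mem_univ (ofLp u))

theorem stmt10_general {n m : ℕ}
    (S : EuclideanSpace ℝ (Fin n) → EuclideanSpace ℝ (Fin m) → ℝ)
    (hSconv : ConvexOn ℝ Set.univ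
      fun q : EuclideanSpace ℝ (Fin n) × EuclideanSpace ℝ (Fin m) => S q.1 q.2)
    (h : EuclideanSpace ℝ (Fin n) → ℝ)
    (hC1 : ContDiff ℝ 1 h)
    (lam : ℝ) (hlam : 0 < lam)
    (xbar : EuclideanSpace ℝ (Fin n)) :
    ∃ Cl > (0 : ℝ), ∃ ε > (0 : ℝ),
      ∀ x ∈ Metric.closedBall xbar ε, ∀ z : EuclideanSpace ℝ (Fin m),
        ∀ p : EuclideanSpace ℝ (Fin n) × EuclideanSpace ℝ (Fin m),
          IsMinOn (fun u : EuclideanSpace ℝ (Fin n) × EuclideanSpace ℝ (Fin m) =>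
              S u.1 u.2 + (‖x - u.1‖ ^ 2 + ‖z - u.2‖ ^ 2) / (2 * lam)) Set.univ p →
          (1 / lam) * Real.sqrt (‖x - p.1‖ ^ 2 + ‖z - p.2‖ ^ 2) + ‖gradient h x‖
            ≤ Cl * (‖z‖ + 1) := by
  set f : WithLp 2 (EuclideanSpace ℝ (Fin n) × EuclideanSpace ℝ (Fin m)) → ℝ :=
    fun u => S u.fst u.snd
  have hf : ConvexOn ℝ Set.univ f := hSconv.comp_linearMap (WithLp.linearEquiv 2 ℝ _).toLinearMap
  set w₀ := WithLp.toLp 2 (xbar, (0 : EuclideanSpace ℝ (Fin m)))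
  obtain ⟨b, hb, hfb⟩ := hf.exists_sub_mul_norm_le_of_locallyLipschitz hf.locallyLipschitz w₀
  obtain ⟨A, hA⟩ := (isCompact_closedBall xbar 1).bddAbove_image
    (hSconv.locallyLipschitz.continuous.comp (continuous_id.prodMk continuous_const)).continuousOn
  obtain ⟨G, hG⟩ := (isCompact_closedBall xbar 1).bddAbove_image
    ((InnerProductSpace.toDual ℝ _).symm.continuous.comp
      (hC1.continuous_fderiv one_ne_zero)).norm.continuousOn
  have hxbar := Metric.mem_closedBall_self (x := xbar) zero_le_one
  have hG0 : 0 ≤ G := (norm_nonneg _).trans (hG ⟨xbar, hxbar, rfl⟩)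
  set c := 3 * lam * b + √(2 * lam * (A - f w₀ + b))
  refine ⟨(1 + c) / lam + G, by positivity, 1, one_pos, fun x hx z p hmin => ?_⟩
  have hprox := norm_sub_le_of_isMinOn_prox hlam hb hfb (isMinOn_prox_toLp hmin)
    (WithLp.toLp 2 (x, 0))
  have hdisp : √(‖x - p.1‖ ^ 2 + ‖z - p.2‖ ^ 2) ≤ ‖z‖ + c := by
    have hsqrt : √(‖x - p.1‖ ^ 2 + ‖z - p.2‖ ^ 2)
        = ‖WithLp.toLp 2 (x, z) - WithLp.toLp 2 p‖ := by
      simp [WithLp.prod_norm_eq_of_L2]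
    have hz : ‖WithLp.toLp 2 (x, z) - WithLp.toLp 2 (x, 0)‖ = ‖z‖ := by
      rw [← WithLp.toLp_sub, Prod.mk_sub_mk, sub_self, sub_zero, WithLp.norm_toLp_snd]
    have hx' : ‖WithLp.toLp 2 (x, (0 : EuclideanSpace ℝ (Fin m))) - w₀‖ ≤ 1 := by
      rw [← dist_eq_norm, WithLp.dist_toLp_fst]
      exact hx
    have hSx : f (WithLp.toLp 2 (x, 0)) ≤ A := hA ⟨x, hx, rfl⟩
    have : √(2 * lam * (f (WithLp.toLp 2 (x, 0)) - f w₀ + b * ‖WithLp.toLp 2 (x, 0) - w₀‖))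
        ≤ √(2 * lam * (A - f w₀ + b)) := by
      gcongr
      linarith [mul_le_of_le_one_right hb hx']
    rw [hsqrt]
    linarith
  have hGx : ‖gradient h x‖ ≤ G := hG ⟨x, hx, rfl⟩
  have hc : 0 ≤ c := by positivity
  have hz1 : ‖z‖ + c ≤ (1 + c) * (‖z‖ + 1) := by nlinarith [norm_nonneg z]
  have hG1 : G ≤ G * (‖z‖ + 1) := le_mul_of_one_le_right hG0 (by linarith [norm_nonneg z])
  calc 1 / lam * √(‖x - p.1‖ ^ 2 + ‖z - p.2‖ ^ 2) + ‖gradient h x‖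
      ≤ 1 / lam * ((1 + c) * (‖z‖ + 1)) + G * (‖z‖ + 1) :=
        add_le_add (by gcongr; exact hdisp.trans hz1) (hGx.trans hG1)
    _ = ((1 + c) / lam + G) * (‖z‖ + 1) := by ring

/-- Lemma 4.1 (growth condition for the regularized gradients): let `S : ℝⁿ × ℝ^m → ℝ` be
convex and continuous, `h : ℝⁿ → ℝ` convex and `C¹`, `λ > 0`, and `x̄` a point with
`S(x̄,0) < h(x̄)`.  Then there are `C_λ > 0` and `ε > 0` such that for every
`x ∈ B_ε(x̄)` and every `z`, if `p` is the minimizer of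
`u ↦ S(u) + ‖(x,z) − u‖²/(2λ)` (i.e. `p = prox_{λS}(x,z)`), then
`(1/λ)·‖(x,z) − p‖ + ‖∇h(x)‖ ≤ C_λ·(‖z‖ + 1)`, which is exactly the asserted bound
`‖∇_x M_λS(x,z) − ∇h(x)‖ ≤ C_λ (‖z‖+1)` since `∇M_λS(x,z) = ((x,z) − p)/λ`. -/
theorem stmt10 {n m : ℕ}
    (S : EuclideanSpace ℝ (Fin n) → EuclideanSpace ℝ (Fin m) → ℝ)
    (hSconv : ConvexOn ℝ Set.univ
      fun q : EuclideanSpace ℝ (Fin n) × EuclideanSpace ℝ (Fin m) => S q.1 q.2)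
    (hScont : Continuous
      fun q : EuclideanSpace ℝ (Fin n) × EuclideanSpace ℝ (Fin m) => S q.1 q.2)
    (h : EuclideanSpace ℝ (Fin n) → ℝ) (hconv : ConvexOn ℝ Set.univ h)
    (hC1 : ContDiff ℝ 1 h)
    (lam : ℝ) (hlam : 0 < lam)
    (xbar : EuclideanSpace ℝ (Fin n)) (hxbar : S xbar 0 < h xbar) :
    ∃ Cl > (0 : ℝ), ∃ ε > (0 : ℝ),
      ∀ x ∈ Metric.closedBall xbar ε, ∀ z : EuclideanSpace ℝ (Fin m),
        ∀ p : EuclideanSpace ℝ (Fin n) × EuclideanSpace ℝ (Fin m),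
          IsMinOn (fun u : EuclideanSpace ℝ (Fin n) × EuclideanSpace ℝ (Fin m) =>
              S u.1 u.2 + (‖x - u.1‖ ^ 2 + ‖z - u.2‖ ^ 2) / (2 * lam)) Set.univ p →
          (1 / lam) * Real.sqrt (‖x - p.1‖ ^ 2 + ‖z - p.2‖ ^ 2) + ‖gradient h x‖
            ≤ Cl * (‖z‖ + 1) :=
  stmt10_general S hSconv h hC1 lam hlam xbar
end
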